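/- Let τ ∈ ℍ and let w, x, y, z be complex numbers. Set w' = (w+x+y+z)/2, x' = (w+x−y−z)/2, y' = (w−x+y−z)/2, z' = (w−x−y+z)/2. Then ϑ₃(w)ϑ₃(x)ϑ₃(y)ϑ₃(z) − ϑ₂(w)ϑ₂(x)ϑ₂(y)ϑ₂(z) = ϑ₀(w')ϑ₀(x')ϑ₀(y')ϑ₀(z') + ϑ₁(w')ϑ₁(x')ϑ₁(y')ϑ₁(z'). -/
import Mathlib


open scoped UpperHalfPlane

/-- `e(x) = exp(2πix)`. -/
noncomputable def e (x : ℂ) : ℂ := Complex.exp (2 * Real.pi * Complex.I * x)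

/-- The theta function with characteristic `(p, q)`:
`θ_{(p,q)}(z,τ) = ∑_{n ∈ ℤ} e((1/2)(n+p)²τ + (n+p)(z+q))`. -/
noncomputable def jtheta (p q : ℝ) (z τ : ℂ) : ℂ :=
  ∑' n : ℤ, e ((1 / 2 : ℂ) * ((n : ℂ) + p) ^ 2 * τ + ((n : ℂ) + p) * (z + q))

/-- Jacobi's basic theta function `ϑ₀(z) = θ_{(0,1/2)}(z,τ)`. -/
noncomputable def jTheta0 (z τ : ℂ) : ℂ := jtheta 0 (1 / 2) z τ

/-- Jacobi's basic theta function `ϑ₁(z) = θ_{(1/2,1/2)}(z,τ)`. -/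
noncomputable def jTheta1 (z τ : ℂ) : ℂ := jtheta (1 / 2) (1 / 2) z τ

/-- Jacobi's basic theta function `ϑ₂(z) = θ_{(1/2,0)}(z,τ)`. -/
noncomputable def jTheta2 (z τ : ℂ) : ℂ := jtheta (1 / 2) 0 z τ

/-- Jacobi's basic theta function `ϑ₃(z) = θ_{(0,0)}(z,τ)`. -/
noncomputable def jTheta3 (z τ : ℂ) : ℂ := jtheta 0 0 z τ

/-! ### Auxiliary lemmas about `e` -/

lemma e_add (a b : ℂ) : e (a + b) = e a * e b := by
  rw [e, e, e, ← Complex.exp_add]; ring_nf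

lemma e_int (k : ℤ) : e k = 1 := by
  rw [e, show 2 * (Real.pi : ℂ) * Complex.I * (k : ℂ) = (k : ℂ) * (2 * Real.pi * Complex.I) by
    ring]
  exact Complex.exp_int_mul_two_pi_mul_I k

lemma e_add_int (a : ℂ) (k : ℤ) : e (a + k) = e a := by
  rw [e_add, e_int, mul_one]

lemma e_half (a : ℂ) : e (a + 1 / 2) = - e a := by
  have h : e (1 / 2 : ℂ) = -1 := by
    rw [e, show 2 * (Real.pi : ℂ) * Complex.I * (1 / 2) = Real.pi * Complex.I by ring,
      Complex.exp_pi_mul_I]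
  rw [e_add, h, mul_neg_one]

lemma e_eq_e {X Y : ℂ} (k : ℤ) (h : Y = X + k) : e X = e Y := by
  rw [h, e_add_int]

lemma e_eq_neg_e {X Y : ℂ} (k : ℤ) (h : Y = X + k + 1 / 2) : - e X = e Y := by
  rw [h, show X + (k : ℂ) + 1 / 2 = (X + 1 / 2) + (k : ℂ) by ring, e_add_int, e_half]

lemma e4 (A B C D : ℂ) : e A * e B * (e C * e D) = e (A + B + C + D) := by
  simp only [e, ← Complex.exp_add]
  congr 1
  ring

/-! ### Single theta terms -/

/-- The `n`-th term of the theta series. -/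
noncomputable def tt (p q : ℝ) (Z τ : ℂ) (n : ℤ) : ℂ :=
  e ((1 / 2 : ℂ) * ((n : ℂ) + p) ^ 2 * τ + ((n : ℂ) + p) * (Z + q))

lemma jtheta_eq_tsum (p q : ℝ) (Z τ : ℂ) : jtheta p q Z τ = ∑' n : ℤ, tt p q Z τ n := rfl

lemma summable_norm_tt (p q : ℝ) (Z τ : ℂ) (hτ : 0 < τ.im) :
    Summable fun n : ℤ => ‖tt p q Z τ n‖ := by
  have key : ∀ n : ℤ, tt p q Z τ n
      = e ((1 / 2 : ℂ) * p ^ 2 * τ + p * (Z + q)) * jacobiTheta₂_term n (p * τ + Z + q) τ := by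
    intro n
    rw [tt, e, e, jacobiTheta₂_term, ← Complex.exp_add]
    congr 1
    ring
  have h2 : Summable fun n : ℤ => ‖jacobiTheta₂_term n (p * τ + Z + q) τ‖ := by
    apply Summable.of_nonneg_of_le (fun n => norm_nonneg _)
      (fun n => norm_jacobiTheta₂_term_le hτ (le_refl |(p * τ + Z + q).im|) le_rfl n)
    simpa using summable_pow_mul_jacobiTheta₂_term_bound |(p * τ + Z + q).im| hτ 0
  simp_rw [key, norm_mul]
  exact h2.mul_left _

/-! ### Quadruple products -/

/-- Term of the fourfold product of theta series. -/
noncomputable def qt (p q : ℝ) (w x y z τ : ℂ) (n : (ℤ × ℤ) × ℤ × ℤ) : ℂ :=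
  tt p q w τ n.1.1 * tt p q x τ n.1.2 * (tt p q y τ n.2.1 * tt p q z τ n.2.2)

lemma summable_norm_qt (p q : ℝ) (w x y z τ : ℂ) (hτ : 0 < τ.im) :
    Summable fun n : (ℤ × ℤ) × ℤ × ℤ => ‖qt p q w x y z τ n‖ := by
  have h := Summable.mul_norm
    (Summable.mul_norm (summable_norm_tt p q w τ hτ) (summable_norm_tt p q x τ hτ))
    (Summable.mul_norm (summable_norm_tt p q y τ hτ) (summable_norm_tt p q z τ hτ))
  simpa only [qt] using h

lemma prod4 (p q : ℝ) (w x y z τ : ℂ) (hτ : 0 < τ.im) :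
    jtheta p q w τ * jtheta p q x τ * jtheta p q y τ * jtheta p q z τ
      = ∑' n : (ℤ × ℤ) × ℤ × ℤ, qt p q w x y z τ n := by
  have h₁ := summable_norm_tt p q w τ hτ
  have h₂ := summable_norm_tt p q x τ hτ
  have h₃ := summable_norm_tt p q y τ hτ
  have h₄ := summable_norm_tt p q z τ hτ
  rw [show jtheta p q w τ * jtheta p q x τ * jtheta p q y τ * jtheta p q z τ
      = (jtheta p q w τ * jtheta p q x τ) * (jtheta p q y τ * jtheta p q z τ) by ring]
  rw [jtheta_eq_tsum, jtheta_eq_tsum, jtheta_eq_tsum, jtheta_eq_tsum,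
    tsum_mul_tsum_of_summable_norm h₁ h₂, tsum_mul_tsum_of_summable_norm h₃ h₄,
    tsum_mul_tsum_of_summable_norm (h₁.mul_norm h₂) (h₃.mul_norm h₄)]
  rfl

/-! ### Sums over a sum type -/

lemma tsum_sum_type {α β : Type*} {f : α ⊕ β → ℂ}
    (h1 : Summable fun a => f (Sum.inl a)) (h2 : Summable fun b => f (Sum.inr b)) :
    ∑' x, f x = (∑' a, f (Sum.inl a)) + ∑' b, f (Sum.inr b) := by
  have k1 : HasSum (Sum.elim (fun a => f (Sum.inl a)) (fun _ : β => (0 : ℂ)))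
      (∑' a, f (Sum.inl a)) := by
    apply (Function.Injective.hasSum_iff Sum.inl_injective ?_).mp
    · exact h1.hasSum
    · rintro (a | b) hx
      · exact absurd ⟨a, rfl⟩ hx
      · rfl
  have k2 : HasSum (Sum.elim (fun _ : α => (0 : ℂ)) (fun b => f (Sum.inr b)))
      (∑' b, f (Sum.inr b)) := by
    apply (Function.Injective.hasSum_iff Sum.inr_injective ?_).mp
    · exact h2.hasSum
    · rintro (a | b) hx
      · rfl
      · exact absurd ⟨b, rfl⟩ hx
  have k3 := k1.add k2
  have hfx : ∀ u, Sum.elim (fun a => f (Sum.inl a)) (fun _ : β => (0 : ℂ)) u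
      + Sum.elim (fun _ : α => (0 : ℂ)) (fun b => f (Sum.inr b)) u = f u := by
    rintro (a | b) <;> simp
  simp only [hfx] at k3
  exact k3.tsum_eq

/-! ### The reindexing map -/

/-- The self-inverse reindexing map underlying Jacobi's identity. -/
def Phi : ((ℤ × ℤ) × ℤ × ℤ) ⊕ ((ℤ × ℤ) × ℤ × ℤ) → ((ℤ × ℤ) × ℤ × ℤ) ⊕ ((ℤ × ℤ) × ℤ × ℤ)
  | .inl ((a, b), (c, d)) =>
      if (a + b + c + d) % 2 = 0 then
        .inl (((a + b + c + d) / 2, (a + b - c - d) / 2),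
              ((a - b + c - d) / 2, (a - b - c + d) / 2))
      else
        .inr (((a + b + c + d - 1) / 2, (a + b - c - d - 1) / 2),
              ((a - b + c - d - 1) / 2, (a - b - c + d - 1) / 2))
  | .inr ((a, b), (c, d)) =>
      if (a + b + c + d) % 2 = 0 then
        .inl (((a + b + c + d + 2) / 2, (a + b - c - d) / 2),
              ((a - b + c - d) / 2, (a - b - c + d) / 2))
      else
        .inr (((a + b + c + d + 1) / 2, (a + b - c - d - 1) / 2),
              ((a - b + c - d - 1) / 2, (a - b - c + d - 1) / 2))

lemma Phi_invol : ∀ n, Phi (Phi n) = n := by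
  rintro (⟨⟨a, b⟩, c, d⟩ | ⟨⟨a, b⟩, c, d⟩) <;>
    · simp only [Phi]
      split_ifs with h1 <;>
        · simp only [Phi]
          split_ifs with h2 <;>
            first
            | (exfalso; omega)
            | (simp only [Sum.inl.injEq, Sum.inr.injEq, Prod.mk.injEq]; omega)

/-- `Phi` as an equivalence. -/
def PhiEquiv : (((ℤ × ℤ) × ℤ × ℤ) ⊕ ((ℤ × ℤ) × ℤ × ℤ)) ≃ (((ℤ × ℤ) × ℤ × ℤ) ⊕ ((ℤ × ℤ) × ℤ × ℤ)) :=
  ⟨Phi, Phi, Phi_invol, Phi_invol⟩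

/-- Jacobi's identity, subtracted form (equation (6.9)). -/
theorem jacobi_identity_minus (τ : ℍ) (w x y z w' x' y' z' : ℂ)
    (hw' : w' = (w + x + y + z) / 2) (hx' : x' = (w + x - y - z) / 2)
    (hy' : y' = (w - x + y - z) / 2) (hz' : z' = (w - x - y + z) / 2) :
    jTheta3 w τ * jTheta3 x τ * jTheta3 y τ * jTheta3 z τ
      - jTheta2 w τ * jTheta2 x τ * jTheta2 y τ * jTheta2 z τ
    = jTheta0 w' τ * jTheta0 x' τ * jTheta0 y' τ * jTheta0 z' τ
      + jTheta1 w' τ * jTheta1 x' τ * jTheta1 y' τ * jTheta1 z' τ := by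
  subst hw' hx' hy' hz'
  set t : ℂ := (τ : ℂ) with ht
  have hτ : 0 < t.im := by simpa [ht] using τ.im_pos
  set w' := (w + x + y + z) / 2 with hw'
  set x' := (w + x - y - z) / 2 with hx'
  set y' := (w - x + y - z) / 2 with hy'
  set z' := (w - x - y + z) / 2 with hz'
  simp only [jTheta0, jTheta1, jTheta2, jTheta3]
  rw [prod4 0 0 w x y z t hτ, prod4 (1/2) 0 w x y z t hτ,
    prod4 0 (1/2) w' x' y' z' t hτ, prod4 (1/2) (1/2) w' x' y' z' t hτ]
  set f : (((ℤ × ℤ) × ℤ × ℤ) ⊕ ((ℤ × ℤ) × ℤ × ℤ)) → ℂ :=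
    Sum.elim (fun n => qt 0 0 w x y z t n) (fun n => - qt (1/2) 0 w x y z t n) with hf
  set g : (((ℤ × ℤ) × ℤ × ℤ) ⊕ ((ℤ × ℤ) × ℤ × ℤ)) → ℂ :=
    Sum.elim (fun n => qt 0 (1/2) w' x' y' z' t n) (fun n => qt (1/2) (1/2) w' x' y' z' t n)
    with hg
  have hs3 := (summable_norm_qt 0 0 w x y z t hτ).of_norm
  have hs2 := (summable_norm_qt (1/2) 0 w x y z t hτ).of_norm
  have hs0 := (summable_norm_qt 0 (1/2) w' x' y' z' t hτ).of_norm
  have hs1 := (summable_norm_qt (1/2) (1/2) w' x' y' z' t hτ).of_norm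
  have hL : (∑' n, qt 0 0 w x y z t n) - (∑' n, qt (1/2) 0 w x y z t n) = ∑' m, f m := by
    rw [tsum_sum_type (f := f) hs3 hs2.neg]
    simp only [hf, Sum.elim_inl, Sum.elim_inr, tsum_neg]
    ring
  have hR : (∑' n, qt 0 (1/2) w' x' y' z' t n) + (∑' n, qt (1/2) (1/2) w' x' y' z' t n)
      = ∑' m, g m := by
    rw [tsum_sum_type (f := g) hs0 hs1]
    simp only [hg, Sum.elim_inl, Sum.elim_inr]
  rw [hL, hR, ← PhiEquiv.tsum_eq g]
  apply tsum_congr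
  rintro (⟨⟨a, b⟩, c, d⟩ | ⟨⟨a, b⟩, c, d⟩) <;>
    simp only [hf, hg, PhiEquiv, Equiv.coe_fn_mk, Phi, Sum.elim_inl, Sum.elim_inr, qt, tt] <;>
    split_ifs with h <;>
    simp only [Sum.elim_inl, Sum.elim_inr, qt, tt] <;>
    rw [e4, e4]
  · -- ϑ₃ → ϑ₀, sum even
    have c1 : ((((a + b + c + d) / 2 : ℤ)) : ℂ) = ((a : ℂ) + b + c + d) / 2 := by
      have h1 : ((a + b + c + d) / 2 : ℤ) * 2 = a + b + c + d := by omega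
      have := congrArg (Int.cast : ℤ → ℂ) h1
      push_cast at this
      linear_combination this / 2
    have c2 : ((((a + b - c - d) / 2 : ℤ)) : ℂ) = ((a : ℂ) + b - c - d) / 2 := by
      have h1 : ((a + b - c - d) / 2 : ℤ) * 2 = a + b - c - d := by omega
      have := congrArg (Int.cast : ℤ → ℂ) h1
      push_cast at this
      linear_combination this / 2
    have c3 : ((((a - b + c - d) / 2 : ℤ)) : ℂ) = ((a : ℂ) - b + c - d) / 2 := by
      have h1 : ((a - b + c - d) / 2 : ℤ) * 2 = a - b + c - d := by omega
      have := congrArg (Int.cast : ℤ → ℂ) h1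
      push_cast at this
      linear_combination this / 2
    have c4 : ((((a - b - c + d) / 2 : ℤ)) : ℂ) = ((a : ℂ) - b - c + d) / 2 := by
      have h1 : ((a - b - c + d) / 2 : ℤ) * 2 = a - b - c + d := by omega
      have := congrArg (Int.cast : ℤ → ℂ) h1
      push_cast at this
      linear_combination this / 2
    apply e_eq_e a
    rw [c1, c2, c3, c4, hw', hx', hy', hz']
    push_cast
    ring
  · -- ϑ₃ → ϑ₁, sum odd
    have c1 : ((((a + b + c + d - 1) / 2 : ℤ)) : ℂ) = ((a : ℂ) + b + c + d - 1) / 2 := by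
      have h1 : ((a + b + c + d - 1) / 2 : ℤ) * 2 = a + b + c + d - 1 := by omega
      have := congrArg (Int.cast : ℤ → ℂ) h1
      push_cast at this
      linear_combination this / 2
    have c2 : ((((a + b - c - d - 1) / 2 : ℤ)) : ℂ) = ((a : ℂ) + b - c - d - 1) / 2 := by
      have h1 : ((a + b - c - d - 1) / 2 : ℤ) * 2 = a + b - c - d - 1 := by omega
      have := congrArg (Int.cast : ℤ → ℂ) h1
      push_cast at this
      linear_combination this / 2
    have c3 : ((((a - b + c - d - 1) / 2 : ℤ)) : ℂ) = ((a : ℂ) - b + c - d - 1) / 2 := by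
      have h1 : ((a - b + c - d - 1) / 2 : ℤ) * 2 = a - b + c - d - 1 := by omega
      have := congrArg (Int.cast : ℤ → ℂ) h1
      push_cast at this
      linear_combination this / 2
    have c4 : ((((a - b - c + d - 1) / 2 : ℤ)) : ℂ) = ((a : ℂ) - b - c + d - 1) / 2 := by
      have h1 : ((a - b - c + d - 1) / 2 : ℤ) * 2 = a - b - c + d - 1 := by omega
      have := congrArg (Int.cast : ℤ → ℂ) h1
      push_cast at this
      linear_combination this / 2
    apply e_eq_e a
    rw [c1, c2, c3, c4, hw', hx', hy', hz']
    push_cast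
    ring
  · -- ϑ₂ → ϑ₀, sum even
    have c1 : ((((a + b + c + d + 2) / 2 : ℤ)) : ℂ) = ((a : ℂ) + b + c + d + 2) / 2 := by
      have h1 : ((a + b + c + d + 2) / 2 : ℤ) * 2 = a + b + c + d + 2 := by omega
      have := congrArg (Int.cast : ℤ → ℂ) h1
      push_cast at this
      linear_combination this / 2
    have c2 : ((((a + b - c - d) / 2 : ℤ)) : ℂ) = ((a : ℂ) + b - c - d) / 2 := by
      have h1 : ((a + b - c - d) / 2 : ℤ) * 2 = a + b - c - d := by omega
      have := congrArg (Int.cast : ℤ → ℂ) h1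
      push_cast at this
      linear_combination this / 2
    have c3 : ((((a - b + c - d) / 2 : ℤ)) : ℂ) = ((a : ℂ) - b + c - d) / 2 := by
      have h1 : ((a - b + c - d) / 2 : ℤ) * 2 = a - b + c - d := by omega
      have := congrArg (Int.cast : ℤ → ℂ) h1
      push_cast at this
      linear_combination this / 2
    have c4 : ((((a - b - c + d) / 2 : ℤ)) : ℂ) = ((a : ℂ) - b - c + d) / 2 := by
      have h1 : ((a - b - c + d) / 2 : ℤ) * 2 = a - b - c + d := by omega
      have := congrArg (Int.cast : ℤ → ℂ) h1
      push_cast at this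
      linear_combination this / 2
    apply e_eq_neg_e a
    rw [c1, c2, c3, c4, hw', hx', hy', hz']
    push_cast
    ring
  · -- ϑ₂ → ϑ₁, sum odd
    have c1 : ((((a + b + c + d + 1) / 2 : ℤ)) : ℂ) = ((a : ℂ) + b + c + d + 1) / 2 := by
      have h1 : ((a + b + c + d + 1) / 2 : ℤ) * 2 = a + b + c + d + 1 := by omega
      have := congrArg (Int.cast : ℤ → ℂ) h1
      push_cast at this
      linear_combination this / 2
    have c2 : ((((a + b - c - d - 1) / 2 : ℤ)) : ℂ) = ((a : ℂ) + b - c - d - 1) / 2 := by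
      have h1 : ((a + b - c - d - 1) / 2 : ℤ) * 2 = a + b - c - d - 1 := by omega
      have := congrArg (Int.cast : ℤ → ℂ) h1
      push_cast at this
      linear_combination this / 2
    have c3 : ((((a - b + c - d - 1) / 2 : ℤ)) : ℂ) = ((a : ℂ) - b + c - d - 1) / 2 := by
      have h1 : ((a - b + c - d - 1) / 2 : ℤ) * 2 = a - b + c - d - 1 := by omega
      have := congrArg (Int.cast : ℤ → ℂ) h1
      push_cast at this
      linear_combination this / 2
    have c4 : ((((a - b - c + d - 1) / 2 : ℤ)) : ℂ) = ((a : ℂ) - b - c + d - 1) / 2 := by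
      have h1 : ((a - b - c + d - 1) / 2 : ℤ) * 2 = a - b - c + d - 1 := by omega
      have := congrArg (Int.cast : ℤ → ℂ) h1
      push_cast at this
      linear_combination this / 2
    apply e_eq_neg_e a
    rw [c1, c2, c3, c4, hw', hx', hy', hz']
    push_cast
    ring
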